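/- arXiv:1908.01181 — 2 statements merged into one kernel-verified Lean document; each statement's English description precedes it below -/
import Mathlib

section
/- Let X be a nonempty set, let p ≥ 1, and let f_1,…,f_p : X → ℝ satisfy f_j(x) > 0 for all x ∈ X and all j. Let 0 < LB(j) ≤ f_j(x) ≤ UB(j) hold for all x ∈ X and all j, let ε > 0, let σ ≥ 1, and set ε' := ε/(σ·p) and u_j := ⌊log_{1+ε'}(UB(j)/LB(j))⌋ for each j. Suppose that for every w ∈ ℝ^p with w_j > 0 for all j there is a solution sol(w) ∈ X with ∑_{j=1}^p w_j·f_j(sol(w)) ≤ σ·∑_{j=1}^p w_j·f_j(x) for all x ∈ X. Let W be the set of all weight vectors w with w_j = 1/(LB(j)·(1+ε')^{i_j}) where i_j ∈ {0,…,u_j} for all j and i_k = 0 for at least one k, and let P := {sol(w) : w ∈ W}. Then W is finite with |W| ≤ ∑_{k=1}^p ∏_{j≠k} (u_j + 1), and for every x' ∈ X there exists x ∈ P such that, setting α_j := max{1, f_j(x)/f_j(x')}, the sum of α_j over all indices j with α_j > 1 is at most σ·p + ε and α_i ≤ σ for at least one index i. -/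
/-! Given x', round each ratio f_j(x')/LB(j) down to a power (1+ε')^{n_j} and shift all
exponents by their minimum m. The resulting grid weight w ∈ W makes every term w_j·f_j(x')
lie in [(1+ε')^m, (1+ε')^{m+1}], so all objectives of x' are balanced up to the factor 1+ε'.
Then σ-optimality of sol(w) bounds ∑_j w_j·f_j(sol w) by σ·p·(1+ε')^{m+1}, and since
f_j(sol w)/f_j(x') ≤ w_j·f_j(sol w)/(1+ε')^m, the factors α_j > 1 sum to at most
σ·p·(1+ε') = σ·p + ε. Some α_i ≤ σ because otherwise the weighted sum of sol(w) would
exceed σ times that of x'. -/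

open Finset

section Grid

variable {ι : Type*} [Fintype ι] [DecidableEq ι]

def gridIndicesWithZero (u : ι → ℕ) : Finset (ι → ℕ) :=
  {i ∈ Fintype.piFinset fun j => range (u j + 1) | ∃ k, i k = 0}

theorem mem_gridIndicesWithZero {u i : ι → ℕ} :
    i ∈ gridIndicesWithZero u ↔ (∀ j, i j ≤ u j) ∧ ∃ k, i k = 0 := by
  simp [gridIndicesWithZero]

theorem card_gridIndicesWithZero_le (u : ι → ℕ) :
    #(gridIndicesWithZero u) ≤ ∑ k, ∏ j ∈ univ.erase k, (u j + 1) := by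
  set slice : ι → Finset (ι → ℕ) := fun k =>
    Fintype.piFinset (Function.update (fun j => range (u j + 1)) k {0})
  have hsub : gridIndicesWithZero u ⊆ univ.biUnion slice := by
    intro i hi
    obtain ⟨hiu, k, hk⟩ := mem_gridIndicesWithZero.1 hi
    refine mem_biUnion.2 ⟨k, mem_univ k, Fintype.mem_piFinset.2 fun j => ?_⟩
    rcases eq_or_ne j k with rfl | hjk
    · simp [hk]
    · simp [hjk, hiu j]
  have hslice : ∀ k, #(slice k) = ∏ j ∈ univ.erase k, (u j + 1) := fun k => by
    simp [slice, Fintype.card_piFinset, Function.apply_update (fun _ s => #s),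
      prod_update_of_mem (mem_univ k), sdiff_singleton_eq_erase]
  calc #(gridIndicesWithZero u) ≤ #(univ.biUnion slice) := card_le_card hsub
    _ ≤ ∑ k, #(slice k) := card_biUnion_le
    _ = ∑ k, ∏ j ∈ univ.erase k, (u j + 1) := sum_congr rfl fun k _ => hslice k

theorem ncard_image_gridIndicesWithZero_le {α : Type*} (φ : (ι → ℕ) → α)
    (u : ι → ℕ) :
    (φ '' gridIndicesWithZero u).ncard ≤ ∑ k, ∏ j ∈ univ.erase k, (u j + 1) :=
  (Set.ncard_image_le (finite_toSet _)).trans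
    ((Set.ncard_coe_finset _).trans_le (card_gridIndicesWithZero_le u))

end Grid

noncomputable def gridWeight {ι : Type*} (LB : ι → ℝ) (b : ℝ) (i : ι → ℕ) :
    ι → ℝ := fun j => 1 / (LB j * b ^ i j)

theorem natCast_le_floor_logb_of_pow_le {b y : ℝ} {n : ℕ} (hb : 1 < b) (hn : b ^ n ≤ y) :
    (n : ℤ) ≤ ⌊Real.logb b y⌋ := by
  have hy : 0 < y := (pow_pos (by linarith) n).trans_le hn
  rw [Int.le_floor, Int.cast_natCast, Real.le_logb_iff_rpow_le hb hy, Real.rpow_natCast]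
  exact hn

theorem exists_shifted_pow_near {ι : Type*} [Fintype ι] [Nonempty ι] {b : ℝ} (hb : 1 < b)
    {r : ι → ℝ} (hr : ∀ j, 1 ≤ r j) :
    ∃ (i : ι → ℕ) (m : ℕ), (∃ k, i k = 0) ∧
      ∀ j, b ^ (i j + m) ≤ r j ∧ r j < b ^ (i j + m + 1) := by
  choose n hn using fun j => exists_nat_pow_near (hr j) hb
  obtain ⟨k, -, hk⟩ := exists_min_image univ n univ_nonempty
  refine ⟨fun j => n j - n k, n k, ⟨k, Nat.sub_self _⟩, fun j => ?_⟩
  rw [Nat.sub_add_cancel (hk j (mem_univ j))]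
  exact hn j

theorem one_div_mul_pow_mul_mem_Icc {b L t : ℝ} {i m : ℕ} (hb : 0 < b)
    (hlo : b ^ (i + m) ≤ t / L) (hhi : t / L < b ^ (i + m + 1)) :
    1 / (L * b ^ i) * t ∈ Set.Icc (b ^ m) (b * b ^ m) := by
  have hbi : 0 < b ^ i := pow_pos hb i
  have heq : 1 / (L * b ^ i) * t = t / L / b ^ i := by field_simp
  rw [heq, Set.mem_Icc, le_div_iff₀ hbi, div_le_iff₀ hbi]
  constructor
  · calc b ^ m * b ^ i = b ^ (i + m) := by ring
      _ ≤ t / L := hlo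
  · calc t / L ≤ b ^ (i + m + 1) := hhi.le
      _ = b * b ^ m * b ^ i := by ring

theorem exists_gridWeight_mul_mem_Icc {ι : Type*} [Fintype ι] [DecidableEq ι] [Nonempty ι]
    {b : ℝ} (hb : 1 < b) {LB UB t : ι → ℝ} {u : ι → ℕ} (hLB : ∀ j, 0 < LB j)
    (hlo : ∀ j, LB j ≤ t j) (hhi : ∀ j, t j ≤ UB j)
    (hu : ∀ j, (u j : ℤ) = ⌊Real.logb b (UB j / LB j)⌋) :
    ∃ i ∈ gridIndicesWithZero u, ∃ m : ℕ,
      ∀ j, gridWeight LB b i j * t j ∈ Set.Icc (b ^ m) (b * b ^ m) := by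
  obtain ⟨i, m, hk, hnear⟩ :=
    exists_shifted_pow_near hb fun j => (one_le_div (hLB j)).2 (hlo j)
  have hiu : ∀ j, i j ≤ u j := fun j => by
    have := natCast_le_floor_logb_of_pow_le hb
      ((hnear j).1.trans (div_le_div_of_nonneg_right (hhi j) (hLB j).le))
    have := hu j
    omega
  exact ⟨i, mem_gridIndicesWithZero.2 ⟨hiu, hk⟩, m, fun j =>
    one_div_mul_pow_mul_mem_Icc (by linarith) (hnear j).1 (hnear j).2⟩

section WeightedSum

variable {ι : Type*} [Fintype ι] {a b w : ι → ℝ}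

theorem exists_le_mul_of_weighted_sum_le [Nonempty ι] {σ : ℝ} (hw : ∀ j, 0 < w j)
    (hsum : ∑ j, w j * a j ≤ σ * ∑ j, w j * b j) : ∃ i, a i ≤ σ * b i := by
  rw [mul_sum] at hsum
  obtain ⟨i, -, hi⟩ := exists_le_of_sum_le univ_nonempty hsum
  exact ⟨i, le_of_mul_le_mul_left (by linarith) (hw i)⟩

theorem sum_filter_max_one_div_le {c : ℝ} (ha : ∀ j, 0 ≤ a j) (hb : ∀ j, 0 < b j)
    (hc : 0 < c) (hcw : ∀ j, c ≤ w j * b j) :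
    ∑ j ∈ univ.filter (fun j => 1 < max 1 (a j / b j)), max 1 (a j / b j) ≤
      (∑ j, w j * a j) / c := by
  have hw : ∀ j, 0 < w j := fun j => pos_of_mul_pos_left (hc.trans_le (hcw j)) (hb j).le
  have hratio : ∀ j, a j / b j ≤ w j * a j / c := fun j => by
    rw [div_le_div_iff₀ (hb j) hc]
    nlinarith [mul_le_mul_of_nonneg_left (hcw j) (ha j)]
  rw [sum_div]
  calc ∑ j ∈ univ.filter (fun j => 1 < max 1 (a j / b j)), max 1 (a j / b j)
      ≤ ∑ j ∈ univ.filter (fun j => 1 < max 1 (a j / b j)), w j * a j / c := by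
        refine sum_le_sum fun j hj => ?_
        have hgt : 1 < a j / b j := by simpa using (mem_filter.1 hj).2
        rw [max_eq_right hgt.le]
        exact hratio j
    _ ≤ ∑ j, w j * a j / c :=
        sum_le_sum_of_subset_of_nonneg (filter_subset _ _) fun j _ _ =>
          div_nonneg (mul_nonneg (hw j).le (ha j)) hc.le

theorem sum_filter_max_one_div_le_of_balanced {σ δ c : ℝ} (hσ : 0 ≤ σ) (hc : 0 < c)
    (ha : ∀ j, 0 ≤ a j) (hb : ∀ j, 0 < b j)
    (hlo : ∀ j, c ≤ w j * b j) (hhi : ∀ j, w j * b j ≤ (1 + δ) * c)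
    (hsum : ∑ j, w j * a j ≤ σ * ∑ j, w j * b j) :
    ∑ j ∈ univ.filter (fun j => 1 < max 1 (a j / b j)), max 1 (a j / b j) ≤
      σ * Fintype.card ι * (1 + δ) := by
  have hbsum : ∑ j, w j * b j ≤ Fintype.card ι * ((1 + δ) * c) := by
    simpa using sum_le_sum fun j (_ : j ∈ univ) => hhi j
  calc _ ≤ (∑ j, w j * a j) / c := sum_filter_max_one_div_le ha hb hc hlo
    _ ≤ σ * (Fintype.card ι * ((1 + δ) * c)) / c := by
        gcongr
        exact hsum.trans (mul_le_mul_of_nonneg_left hbsum hσ)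
    _ = σ * Fintype.card ι * (1 + δ) := by field_simp

end WeightedSum

theorem multi_factor_approx_min_general
    {X : Type*} (p : ℕ) (hp : 1 ≤ p)
    (f : Fin p → X → ℝ)
    (LB UB : Fin p → ℝ) (hLB : ∀ j, 0 < LB j)
    (hlo : ∀ x j, LB j ≤ f j x) (hhi : ∀ x j, f j x ≤ UB j)
    (ε : ℝ) (hε : 0 < ε) (σ : ℝ) (hσ : 1 ≤ σ)
    (ε' : ℝ) (hε' : ε' = ε / (σ * p))
    (u : Fin p → ℕ) (hu : ∀ j, (u j : ℤ) = ⌊Real.logb (1 + ε') (UB j / LB j)⌋)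
    (sol : (Fin p → ℝ) → X)
    (hsol : ∀ w : Fin p → ℝ, (∀ j, 0 < w j) →
      ∀ x : X, ∑ j, w j * f j (sol w) ≤ σ * ∑ j, w j * f j x)
    (W : Set (Fin p → ℝ))
    (hW : W = {w | ∃ i : Fin p → ℕ, (∀ j, i j ≤ u j) ∧ (∃ k, i k = 0) ∧
      ∀ j, w j = 1 / (LB j * (1 + ε') ^ (i j))}) :
    W.Finite ∧
    W.ncard ≤ ∑ k : Fin p, ∏ j ∈ univ.erase k, (u j + 1) ∧
    ∀ x' : X, ∃ w ∈ W,
      (∑ j ∈ univ.filter (fun j => 1 < max 1 (f j (sol w) / f j x')),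
          max 1 (f j (sol w) / f j x')) ≤ σ * p + ε ∧
      ∃ i : Fin p, max 1 (f i (sol w) / f i x') ≤ σ := by
  have hb : 1 < 1 + ε' := by
    have : (0 : ℝ) < p := by exact_mod_cast hp
    have : 0 < ε' := by rw [hε']; positivity
    linarith
  have hfpos : ∀ j x, 0 < f j x := fun j x => (hLB j).trans_le (hlo x j)
  have hWeq : W = gridWeight LB (1 + ε') '' gridIndicesWithZero u := by
    ext w
    simp [hW, gridWeight, mem_gridIndicesWithZero, funext_iff, eq_comm, and_assoc]
  refine ⟨hWeq ▸ (gridIndicesWithZero u).finite_toSet.image _,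
    hWeq ▸ ncard_image_gridIndicesWithZero_le _ u, fun x' => ?_⟩
  have : Nonempty (Fin p) := ⟨⟨0, hp⟩⟩
  obtain ⟨i, hi, m, hbal⟩ :=
    exists_gridWeight_mul_mem_Icc hb hLB (hlo x') (hhi x') hu
  set w := gridWeight LB (1 + ε') i
  have hwpos : ∀ j, 0 < w j := fun j =>
    one_div_pos.2 (mul_pos (hLB j) (pow_pos (by linarith) _))
  have hsum := hsol w hwpos x'
  refine ⟨w, hWeq ▸ Set.mem_image_of_mem _ hi, ?_, ?_⟩
  · calc _ ≤ σ * Fintype.card (Fin p) * (1 + ε') :=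
          sum_filter_max_one_div_le_of_balanced (by linarith) (by positivity)
            (fun j => (hfpos j _).le) (fun j => hfpos j x') (fun j => (hbal j).1)
            (fun j => (hbal j).2) hsum
      _ = σ * p + ε := by rw [Fintype.card_fin, hε']; field_simp
  · obtain ⟨k, hk⟩ := exists_le_mul_of_weighted_sum_le hwpos hsum
    exact ⟨k, max_le hσ ((div_le_iff₀ (hfpos k x')).2 hk)⟩

open Finset in
/-- Theorem 3.3: Algorithm 1 outputs, using a σ-approximation algorithm `sol` for
the weighted sum problem and the grid of weight vectors W, a multi-factor
A-approximation where every feasible solution x' is approximated by some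
solution sol(w), w ∈ W, with factors α_j = max{1, f_j(sol w)/f_j(x')} satisfying
∑_{j : α_j > 1} α_j ≤ σ·p + ε and α_i ≤ σ for at least one i; moreover W is
finite with |W| ≤ ∑_k ∏_{j ≠ k} (u_j + 1). -/
theorem multi_factor_approx_min
    {X : Type*} [Nonempty X] (p : ℕ) (hp : 1 ≤ p)
    (f : Fin p → X → ℝ) (hf : ∀ j x, 0 < f j x)
    (LB UB : Fin p → ℝ) (hLB : ∀ j, 0 < LB j)
    (hlo : ∀ x j, LB j ≤ f j x) (hhi : ∀ x j, f j x ≤ UB j)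
    (ε : ℝ) (hε : 0 < ε) (σ : ℝ) (hσ : 1 ≤ σ)
    (ε' : ℝ) (hε' : ε' = ε / (σ * p))
    (u : Fin p → ℕ) (hu : ∀ j, (u j : ℤ) = ⌊Real.logb (1 + ε') (UB j / LB j)⌋)
    (sol : (Fin p → ℝ) → X)
    (hsol : ∀ w : Fin p → ℝ, (∀ j, 0 < w j) →
      ∀ x : X, ∑ j, w j * f j (sol w) ≤ σ * ∑ j, w j * f j x)
    (W : Set (Fin p → ℝ))
    (hW : W = {w | ∃ i : Fin p → ℕ, (∀ j, i j ≤ u j) ∧ (∃ k, i k = 0) ∧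
      ∀ j, w j = 1 / (LB j * (1 + ε') ^ (i j))}) :
    W.Finite ∧
    W.ncard ≤ ∑ k : Fin p, ∏ j ∈ univ.erase k, (u j + 1) ∧
    ∀ x' : X, ∃ w ∈ W,
      (∑ j ∈ univ.filter (fun j => 1 < max 1 (f j (sol w) / f j x')),
          max 1 (f j (sol w) / f j x')) ≤ σ * p + ε ∧
      ∃ i : Fin p, max 1 (f i (sol w) / f i x') ≤ σ :=
  multi_factor_approx_min_general p hp f LB UB hLB hlo hhi ε hε σ hσ ε' hε' u hu sol hsol W hW
end

section
/- For every integer p ≥ 2 and every ε with 0 < ε < p − 1, there exists a finite nonempty set Y ⊂ ℝ^p with y_j > 0 for all y ∈ Y and all j, and a point ỹ ∈ Y, such that no supported point of Y (p−ε,…,p−ε)-approximates ỹ; that is, for every y ∈ Y for which there exists w ∈ ℝ^p with w_j > 0 for all j and ∑_{j=1}^p w_j·y_j ≤ ∑_{j=1}^p w_j·y'_j for all y' ∈ Y, there exists an index j with y_j > (p − ε)·ỹ_j. -/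
/-!
Take ỹ = (1, …, 1) together with the points bᵢ that equal p − ε/2 in coordinate i and a small
δ > 0 elsewhere. The bᵢ sum to less than p · ỹ in every coordinate, so for any positive weight
vector some bᵢ is strictly cheaper than ỹ, and ỹ is not supported. Every other point is some bᵢ,
whose i-th coordinate exceeds (p − ε) · ỹᵢ.
-/

open Finset

section

variable {ι κ : Type*} [Fintype ι] [Fintype κ]

def IsSupported (Y : Set (κ → ℝ)) (y : κ → ℝ) : Prop :=
  ∃ w : κ → ℝ, (∀ j, 0 < w j) ∧ ∀ y' ∈ Y, ∑ j, w j * y j ≤ ∑ j, w j * y' j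

theorem not_isSupported_of_sum_lt [Nonempty κ] {Y : Set (κ → ℝ)} {y : κ → ℝ}
    (b : ι → κ → ℝ) (hbY : ∀ i, b i ∈ Y) (hb : ∀ j, ∑ i, b i j < Fintype.card ι * y j) :
    ¬ IsSupported Y y := by
  rintro ⟨w, hw, hmin⟩
  have hlt : ∑ i, ∑ j, w j * b i j < ∑ _i : ι, ∑ j, w j * y j := calc
    ∑ i, ∑ j, w j * b i j = ∑ j, w j * ∑ i, b i j := by rw [sum_comm]; simp_rw [mul_sum]
    _ < ∑ j, w j * (Fintype.card ι * y j) :=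
      sum_lt_sum_of_nonempty univ_nonempty fun j _ => mul_lt_mul_of_pos_left (hb j) (hw j)
    _ = ∑ _i : ι, ∑ j, w j * y j := by
      rw [sum_const, card_univ, nsmul_eq_mul, mul_sum]
      exact sum_congr rfl fun j _ => by ring
  obtain ⟨i, -, hi⟩ := exists_lt_of_sum_lt hlt
  exact hi.not_ge (hmin _ (hbY i))

variable [DecidableEq κ]

def spike (a δ : ℝ) (i : κ) : κ → ℝ := fun j => if j = i then a else δ

theorem sum_spike_apply (a δ : ℝ) (j : κ) :
    ∑ i, spike a δ i j = a + (Fintype.card κ - 1) * δ := by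
  have hoff : ∀ i ∈ univ.erase j, spike a δ i j = δ := fun i hi =>
    if_neg (ne_of_mem_erase hi).symm
  rw [← add_sum_erase univ _ (mem_univ j), sum_congr rfl hoff, sum_const,
    card_erase_of_mem (mem_univ j), card_univ, nsmul_eq_mul, Nat.cast_pred (Fintype.card_pos_iff.mpr ⟨j⟩)]
  simp [spike]

end

theorem supported_not_classical_approx_min_general
    (p : ℕ) (ε : ℝ) (hε : 0 < ε) (hεp : ε < p - 1) :
    ∃ (Y : Set (Fin p → ℝ)) (ytil : Fin p → ℝ),
      Y.Finite ∧ Y.Nonempty ∧ (∀ y ∈ Y, ∀ j, 0 < y j) ∧ ytil ∈ Y ∧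
      ∀ y ∈ Y,
        (∃ w : Fin p → ℝ, (∀ j, 0 < w j) ∧
          ∀ y' ∈ Y, ∑ j, w j * y j ≤ ∑ j, w j * y' j) →
        ∃ j, (p - ε) * ytil j < y j := by
  have hp : (0 : ℝ) < p := by linarith
  have : Nonempty (Fin p) := ⟨⟨0, by exact_mod_cast hp⟩⟩
  set δ := ε / (2 * p)
  have hδ : 0 < δ := by positivity
  have hpδ : p * δ = ε / 2 := by unfold δ; field_simp
  set b : Fin p → Fin p → ℝ := spike (p - ε / 2) δ
  refine ⟨insert 1 (Set.range b), 1, (Set.finite_range b).insert 1, Set.insert_nonempty _ _,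
    ?_, Set.mem_insert _ _, ?_⟩
  · rintro y (rfl | ⟨i, rfl⟩) j
    · exact one_pos
    · unfold b spike; split_ifs <;> linarith
  · rintro y (rfl | ⟨i, rfl⟩) hsupp
    · refine absurd hsupp (not_isSupported_of_sum_lt b (fun i => Set.mem_insert_of_mem _ ⟨i, rfl⟩)
        fun j => ?_)
      rw [sum_spike_apply, Fintype.card_fin]
      simp only [Pi.one_apply, mul_one]
      linarith
    · exact ⟨i, by simp only [b, spike, if_pos, Pi.one_apply]; linarith⟩

/-- Theorem 3.11: for every p ≥ 2 and 0 < ε < p − 1 there is an instance of a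
p-objective minimization problem (a finite set Y of positive points with a
point ỹ ∈ Y) such that no supported point (p−ε,…,p−ε)-approximates ỹ. -/
theorem supported_not_classical_approx_min
    (p : ℕ) (hp : 2 ≤ p) (ε : ℝ) (hε : 0 < ε) (hεp : ε < p - 1) :
    ∃ (Y : Set (Fin p → ℝ)) (ytil : Fin p → ℝ),
      Y.Finite ∧ Y.Nonempty ∧ (∀ y ∈ Y, ∀ j, 0 < y j) ∧ ytil ∈ Y ∧
      ∀ y ∈ Y,
        (∃ w : Fin p → ℝ, (∀ j, 0 < w j) ∧
          ∀ y' ∈ Y, ∑ j, w j * y j ≤ ∑ j, w j * y' j) →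
        ∃ j, (p - ε) * ytil j < y j :=
  supported_not_classical_approx_min_general p ε hε hεp
end
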